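/- Let N ≥ 2 be an integer, z ∈ ℂ, and y ∈ ℝ with y ≠ 0. If P_{N,z}(y) = 0, then the vector φ ∈ ℂ^N defined by φ_n = (z/y)·T_{n−1}(y) + (1 − z/y)·U_{n−1}(y) for n = 1, …, N satisfies φ_1 = 1 (in particular φ ≠ 0) and M^{(N)}(y,z)·φ = 0. -/

import Mathlib

open Matrix

/-- Chebyshev polynomials of the first kind (as functions on ℂ). -/
noncomputable def chebT : ℕ → ℂ → ℂ
  | 0, _ => 1
  | 1, y => y
  | n + 2, y => 2 * y * chebT (n + 1) y - chebT n y

/-- Chebyshev polynomials of the second kind (as functions on ℂ). -/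
noncomputable def chebU : ℕ → ℂ → ℂ
  | 0, _ => 1
  | 1, y => 2 * y
  | n + 2, y => 2 * y * chebU (n + 1) y - chebU n y

/-- The N×N tridiagonal matrix `M^{(N)}(y,z)` with diagonal
`(2y−z, 2y, …, 2y, 2y−conj z)` and `−1` on the subdiagonal and superdiagonal. -/
noncomputable def Mmat (N : ℕ) (y z : ℂ) : Matrix (Fin N) (Fin N) ℂ :=
  Matrix.of fun j k =>
    if (j : ℕ) = (k : ℕ) then
      (if (j : ℕ) = 0 then 2 * y - z
       else if (j : ℕ) = N - 1 then 2 * y - starRingEnd ℂ z else 2 * y)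
    else if (j : ℕ) + 1 = (k : ℕ) ∨ (k : ℕ) + 1 = (j : ℕ) then -1 else 0

/-- The secular polynomial `P_{N,z}(y) = z·conj z·U_{N−2}(y) − (z+conj z)·U_{N−1}(y) + U_N(y)`. -/
noncomputable def Psec (N : ℕ) (z y : ℂ) : ℂ :=
  z * starRingEnd ℂ z * chebU (N - 2) y
    - (z + starRingEnd ℂ z) * chebU (N - 1) y + chebU N y

/-!
Indexing from `0` and putting `U_{-1} = 0`, the vector is `φ_n = U_n(y) - z U_{n-1}(y)`,
a combination of two solutions of the Chebyshev recurrence, so it solves the recurrence itself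
and every interior row of `M φ` vanishes.
The first row vanishes because `φ_0 = 1` and `φ_1 = 2y - z`. In the last row,
`(2y - conj z) φ_{N-1} - φ_{N-2} = φ_N - conj z φ_{N-1}`, which expands to `P_{N,z}(y)`.
-/

theorem Fintype.sum_eq_add_add {α M : Type*} [Fintype α] [DecidableEq α] [AddCommMonoid M]
    {f : α → M} (a b c : α) (hab : a ≠ b) (hac : a ≠ c) (hbc : b ≠ c)
    (h : ∀ x, x ≠ a → x ≠ b → x ≠ c → f x = 0) : ∑ x, f x = f a + f b + f c := by
  rw [← Finset.sum_subset (Finset.subset_univ {a, b, c}) (fun x _ hx => by grind),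
    Finset.sum_insert (by simp [hab, hac]), Finset.sum_pair hbc, add_assoc]

theorem chebT_add_two (n : ℕ) (y : ℂ) :
    chebT (n + 2) y = 2 * y * chebT (n + 1) y - chebT n y := rfl

theorem chebU_add_two (n : ℕ) (y : ℂ) :
    chebU (n + 2) y = 2 * y * chebU (n + 1) y - chebU n y := rfl

section Mmat

variable {N : ℕ} {y z : ℂ}

theorem Mmat_apply_self_of_val_eq_zero {j : Fin N} (h : (j : ℕ) = 0) :
    Mmat N y z j j = 2 * y - z := by
  simp [Mmat, h]

theorem Mmat_apply_self_of_val_eq_sub_one {j : Fin N} (h0 : (j : ℕ) ≠ 0) (h : (j : ℕ) = N - 1) :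
    Mmat N y z j j = 2 * y - starRingEnd ℂ z := by
  simp only [Mmat, of_apply, if_true]
  rw [if_neg h0, if_pos h]

theorem Mmat_apply_self_of_interior {j : Fin N} (h0 : (j : ℕ) ≠ 0) (h : (j : ℕ) ≠ N - 1) :
    Mmat N y z j j = 2 * y := by
  simp [Mmat, h0, h]

theorem Mmat_apply_of_adjacent {j k : Fin N} (h : (j : ℕ) + 1 = k ∨ (k : ℕ) + 1 = j) :
    Mmat N y z j k = -1 := by
  simp only [Mmat, of_apply]
  rw [if_neg (by omega), if_pos h]

theorem Mmat_apply_eq_zero {j k : Fin N} (hjk : (j : ℕ) ≠ k)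
    (h : ¬((j : ℕ) + 1 = k ∨ (k : ℕ) + 1 = j)) : Mmat N y z j k = 0 := by
  simp only [Mmat, of_apply]
  rw [if_neg hjk, if_neg h]

variable (f : ℕ → ℂ)

theorem Mmat_mulVec_apply_first (hN : 1 < N) :
    (Mmat N y z *ᵥ fun i => f i) ⟨0, by omega⟩ = (2 * y - z) * f 0 - f 1 := by
  rw [mulVec, dotProduct, Fintype.sum_eq_add ⟨0, by omega⟩ ⟨1, by omega⟩ (by simp [Fin.ext_iff]),
    Mmat_apply_self_of_val_eq_zero rfl, Mmat_apply_of_adjacent (by simp)]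
  · ring
  · rintro k ⟨hk0, hk1⟩
    simp only [Ne, Fin.ext_iff] at hk0 hk1
    rw [Mmat_apply_eq_zero (by simp; omega) (by simp; omega), zero_mul]

theorem Mmat_mulVec_apply_interior (l : ℕ) (hl : l + 2 < N) :
    (Mmat N y z *ᵥ fun i => f i) ⟨l + 1, by omega⟩ = 2 * y * f (l + 1) - f l - f (l + 2) := by
  rw [mulVec, dotProduct, Fintype.sum_eq_add_add ⟨l, by omega⟩ ⟨l + 1, by omega⟩ ⟨l + 2, by omega⟩
      (by simp [Fin.ext_iff]) (by simp [Fin.ext_iff]) (by simp [Fin.ext_iff]),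
    Mmat_apply_self_of_interior (by simp) (by simp; omega), Mmat_apply_of_adjacent (by simp),
    Mmat_apply_of_adjacent (by simp)]
  · ring
  · intro k hk0 hk1 hk2
    simp only [Ne, Fin.ext_iff] at hk0 hk1 hk2
    rw [Mmat_apply_eq_zero (by simp; omega) (by simp; omega), zero_mul]

theorem Mmat_mulVec_apply_last (m : ℕ) :
    (Mmat (m + 2) y z *ᵥ fun i => f i) ⟨m + 1, by omega⟩ =
      (2 * y - starRingEnd ℂ z) * f (m + 1) - f m := by
  rw [mulVec, dotProduct, Fintype.sum_eq_add ⟨m, by omega⟩ ⟨m + 1, by omega⟩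
      (by simp [Fin.ext_iff]),
    Mmat_apply_self_of_val_eq_sub_one (by simp) (by simp), Mmat_apply_of_adjacent (by simp)]
  · ring
  · rintro k ⟨hk0, hk1⟩
    simp only [Ne, Fin.ext_iff] at hk0 hk1
    rw [Mmat_apply_eq_zero (by simp; omega) (by simp; omega), zero_mul]

end Mmat

section eigenSeq

variable (z y : ℂ)

noncomputable def eigenSeq (n : ℕ) : ℂ := z / y * chebT n y + (1 - z / y) * chebU n y

theorem eigenSeq_zero : eigenSeq z y 0 = 1 := by
  simp [eigenSeq, chebT, chebU]

theorem eigenSeq_add_two (n : ℕ) :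
    eigenSeq z y (n + 2) = 2 * y * eigenSeq z y (n + 1) - eigenSeq z y n := by
  simp only [eigenSeq, chebT_add_two, chebU_add_two]
  ring

variable {y}

theorem eigenSeq_one (hy : y ≠ 0) : eigenSeq z y 1 = 2 * y - z := by
  simp only [eigenSeq, chebT, chebU]
  field_simp
  ring

theorem eigenSeq_succ (hy : y ≠ 0) (n : ℕ) :
    eigenSeq z y (n + 1) = chebU (n + 1) y - z * chebU n y := by
  induction n using Nat.twoStepInduction with
  | zero => simp [eigenSeq_one z hy, chebU]
  | one =>
    rw [eigenSeq_add_two, eigenSeq_one z hy, eigenSeq_zero]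
    simp only [chebU]
    ring
  | more n ih₁ ih₂ =>
    rw [eigenSeq_add_two, ih₁, ih₂, chebU_add_two (n + 1), chebU_add_two n]
    ring

theorem Psec_add_two_eq (hy : y ≠ 0) (m : ℕ) :
    Psec (m + 2) z y = eigenSeq z y (m + 2) - starRingEnd ℂ z * eigenSeq z y (m + 1) := by
  rw [eigenSeq_succ z hy, eigenSeq_succ z hy]
  change _ * chebU m y - _ * chebU (m + 1) y + _ = _
  ring

end eigenSeq

/-- If `y ∈ ℝ`, `y ≠ 0`, is a root of the secular polynomial `P_{N,z}`, then the vector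
`φ_n = (z/y)·T_{n−1}(y) + (1 − z/y)·U_{n−1}(y)` (here 0-based: the n-th entry uses `T_n`, `U_n`)
satisfies `φ_1 = 1` (in particular `φ ≠ 0`) and `M^{(N)}(y,z)·φ = 0`. -/
theorem stmt6 (N : ℕ) (hN : 2 ≤ N) (z : ℂ) (y : ℝ) (hy : y ≠ 0)
    (hroot : Psec N z (y : ℂ) = 0) :
    let φ : Fin N → ℂ := fun n =>
      (z / (y : ℂ)) * chebT (n : ℕ) (y : ℂ) + (1 - z / (y : ℂ)) * chebU (n : ℕ) (y : ℂ)
    φ ⟨0, by omega⟩ = 1 ∧ φ ≠ 0 ∧ Mmat N (y : ℂ) z *ᵥ φ = 0 := by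
  intro φ
  have hy' : (y : ℂ) ≠ 0 := Complex.ofReal_ne_zero.mpr hy
  have hφ₀ : φ ⟨0, by omega⟩ = 1 := eigenSeq_zero z y
  refine ⟨hφ₀, fun h => by simp [h] at hφ₀, ?_⟩
  obtain ⟨m, rfl⟩ : ∃ m, N = m + 2 := ⟨N - 2, by omega⟩
  change (Mmat (m + 2) y z *ᵥ fun i => eigenSeq z y i) = 0
  ext ⟨_ | l, hi⟩
  · rw [Mmat_mulVec_apply_first _ hN, eigenSeq_zero, eigenSeq_one z hy']
    simp
  obtain hl | hl : l + 2 < m + 2 ∨ l = m := by omega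
  · rw [Mmat_mulVec_apply_interior _ l hl, eigenSeq_add_two]
    exact sub_self _
  · subst l
    rw [Pi.zero_apply, ← hroot, Psec_add_two_eq z hy', eigenSeq_add_two, Mmat_mulVec_apply_last]
    ring
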